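/- arXiv:2605.11883 — 7 statements merged into one kernel-verified Lean document; each statement's English description precedes it below -/
import Mathlib

section
/- Let (X,d) be a metric space, T: X → X satisfying (CM_K) with a fixed point z, and let x ∈ X be such that d(T^n x, T^{n+1} x) → 0 as n → ∞. Then T^n x → z as n → ∞. -/
open Filter Topology

theorem stmt_5 {X : Type*} [MetricSpace X] (T : X → X)
    (hK : ∀ x y : X, x ≠ y → dist (T x) (T y) < (dist x (T x) + dist y (T y)) / 2)
    (z : X) (hz : T z = z) (x : X)
    (hx : Tendsto (fun n : ℕ => dist (T^[n] x) (T^[n + 1] x)) atTop (𝓝 0)) :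
    Tendsto (fun n : ℕ => T^[n] x) atTop (𝓝 z) := by
  have key : ∀ n : ℕ, dist (T^[n + 1] x) z ≤ dist (T^[n] x) (T^[n + 1] x) / 2 := by
    intro n
    by_cases h : T^[n] x = z
    · have : T^[n + 1] x = z := by
        rw [Function.iterate_succ_apply', h, hz]
      simp [this, dist_nonneg, div_nonneg dist_nonneg]
    · have := hK (T^[n] x) z h
      rw [hz, dist_self, add_zero] at this
      rw [Function.iterate_succ_apply'] at *
      exact le_of_lt this
  have h2 : Tendsto (fun n : ℕ => dist (T^[n + 1] x) z) atTop (𝓝 0) := by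
    have hhalf : Tendsto (fun n : ℕ => dist (T^[n] x) (T^[n + 1] x) / 2) atTop (𝓝 0) := by
      simpa using hx.div_const 2
    exact squeeze_zero (fun n => dist_nonneg) key hhalf
  have h3 : Tendsto (fun n : ℕ => dist (T^[n] x) z) atTop (𝓝 0) := by
    rw [← tendsto_add_atTop_iff_nat 1]
    exact h2
  exact tendsto_iff_dist_tendsto_zero.mpr h3
end

section
/- The map T: [0,1] → [0,1] with Tx = x/4 for x ∈ [0,1/2] and Tx = x/5 for x ∈ (1/2,1] satisfies d(Tx,Ty) ≤ (1/3)(d(x,Tx) + d(y,Ty)) for all x, y ∈ [0,1], but does not satisfy (CM_B): there exist x ≠ y with |Tx − Ty| > |x − y|. -/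
/-!
Every `x ≥ 0` satisfies `0 ≤ T x ≤ x / 4`, so `|T x - T y| ≤ T x + T y` and each of `T x`, `T y`
is at most a third of its displacement `x - T x ≥ 3x/4`. On the other hand `T` jumps down by
`1/40` at `1/2`, so a point just to the right of `1/2` is mapped farther from `T (1/2)` than it is
from `1/2`.
-/

noncomputable def T7 (x : ℝ) : ℝ := if x ≤ 1 / 2 then x / 4 else x / 5

lemma dist_le_div_three_of_four_mul_le {a b x y : ℝ} (ha : 0 ≤ a) (hax : 4 * a ≤ x)
    (hb : 0 ≤ b) (hby : 4 * b ≤ y) : dist a b ≤ (dist x a + dist y b) / 3 := by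
  calc dist a b ≤ dist a 0 + dist 0 b := dist_triangle a 0 b
    _ = a + b := by simp [Real.dist_eq, abs_of_nonneg ha, abs_of_nonneg hb]
    _ ≤ ((x - a) + (y - b)) / 3 := by linarith
    _ ≤ (dist x a + dist y b) / 3 := by
      gcongr <;> exact le_abs_self _

lemma T7_nonneg {x : ℝ} (hx : 0 ≤ x) : 0 ≤ T7 x := by
  unfold T7; split_ifs <;> linarith

lemma four_mul_T7_le (x : ℝ) : 4 * T7 x ≤ x := by
  unfold T7; split_ifs <;> linarith

theorem stmt_7 :
    (∀ x ∈ Set.Icc (0 : ℝ) 1, ∀ y ∈ Set.Icc (0 : ℝ) 1,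
      dist (T7 x) (T7 y) ≤ (dist x (T7 x) + dist y (T7 y)) / 3) ∧
    (∃ x ∈ Set.Icc (0 : ℝ) 1, ∃ y ∈ Set.Icc (0 : ℝ) 1, x ≠ y ∧
      dist (T7 x) (T7 y) > dist x y) := by
  refine ⟨fun x hx y hy => ?_, ?_⟩
  · exact dist_le_div_three_of_four_mul_le (T7_nonneg hx.1) (four_mul_T7_le x)
      (T7_nonneg hy.1) (four_mul_T7_le y)
  · refine ⟨1 / 2, by norm_num, 51 / 100, by norm_num, by norm_num, ?_⟩
    norm_num [T7, Real.dist_eq]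
end

section
/- Let (X,d) be a metric space, T: X → X satisfy (CM_K), and x ∈ X with lim_n d(T^n x, T^{n+1} x) = 0. Suppose T has a fixed point z. Then for every ε > 0 there exists δ > 0 such that for all i, j ∈ ℕ ∪ {0}, (1/2)(d(T^i x, T^{i+1} x) + d(T^j x, T^{j+1} x)) < ε + δ implies d(T^{i+1} x, T^{j+1} x) ≤ ε. -/
open Filter Topology

theorem stmt_10 {X : Type*} [MetricSpace X] (T : X → X)
    (hK : ∀ x y : X, x ≠ y → dist (T x) (T y) < (dist x (T x) + dist y (T y)) / 2)
    (z : X) (hz : T z = z) (x : X)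
    (hx : Tendsto (fun n : ℕ => dist (T^[n] x) (T^[n + 1] x)) atTop (𝓝 0)) :
    ∀ ε > (0 : ℝ), ∃ δ > (0 : ℝ), ∀ i j : ℕ,
      (dist (T^[i] x) (T^[i + 1] x) + dist (T^[j] x) (T^[j + 1] x)) / 2 < ε + δ →
      dist (T^[i + 1] x) (T^[j + 1] x) ≤ ε := by
  intro ε hε
  set d : ℕ → ℝ := fun n => dist (T^[n] x) (T^[n + 1] x) with hd
  set e : ℕ → ℝ := fun n => dist (T^[n + 1] x) z with he
  have haux2 : ∀ w : X, w ≠ z → dist (T w) z < dist w (T w) / 2 := by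
    intro w hw
    have := hK w z hw
    rw [hz] at this
    simp at this
    linarith
  have hlt : ∀ n, T^[n] x ≠ z → e n < d n / 2 := by
    intro n h
    simpa [he, hd, Function.iterate_succ_apply'] using haux2 _ h
  have hle : ∀ n, e n ≤ d n / 2 := by
    intro n
    by_cases h : T^[n] x = z
    · have h1 : T^[n + 1] x = z := by
        rw [Function.iterate_succ_apply', h, hz]
      have h2 : e n = 0 := by
        show dist (T^[n + 1] x) z = 0
        rw [h1, dist_self]
      have h3 : d n = 0 := by
        show dist (T^[n] x) (T^[n + 1] x) = 0
        rw [h, h1, dist_self]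
      rw [h2, h3]; norm_num
    · exact (hlt n h).le
  have hdpos_ne : ∀ n, 0 < d n → T^[n] x ≠ z := by
    intro n hn h
    have h1 : T^[n + 1] x = z := by
      rw [Function.iterate_succ_apply', h, hz]
    have : d n = 0 := by
      show dist (T^[n] x) (T^[n + 1] x) = 0
      rw [h, h1, dist_self]
    linarith
  obtain ⟨N, hN⟩ := Metric.tendsto_atTop.1 hx ε hε
  have hN' : ∀ n, ε < d n → n < N := by
    intro n h
    by_contra hc
    push_neg at hc
    have := hN n hc
    rw [Real.dist_eq, sub_zero, abs_of_nonneg dist_nonneg] at this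
    exact absurd this (not_lt.2 h.le)
  set S : Finset ℕ := (Finset.range N).filter (fun n => ε < d n) with hS
  set c : ℕ → ℝ := fun n => d n / 2 - e n with hc
  have hcpos : ∀ n ∈ S, 0 < c n := by
    intro n hn
    have hdn : ε < d n := (Finset.mem_filter.1 hn).2
    have : e n < d n / 2 := hlt n (hdpos_ne n (lt_trans hε hdn))
    simp [hc]; linarith
  by_cases hSne : S.Nonempty
  · refine ⟨S.inf' hSne c, ?_, ?_⟩
    · exact (Finset.lt_inf'_iff hSne).2 hcpos
    · intro i j hij
      have htri : dist (T^[i + 1] x) (T^[j + 1] x) ≤ e i + e j :=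
        dist_triangle_right _ _ _
      by_cases hi : ε < d i
      · have hiS : i ∈ S := Finset.mem_filter.2 ⟨Finset.mem_range.2 (hN' i hi), hi⟩
        have hδ : S.inf' hSne c ≤ c i := Finset.inf'_le c hiS
        have h2 := hle j
        have : e i + e j < ε := by
          rw [show c i = d i / 2 - e i from rfl] at hδ
          have : e i ≤ d i / 2 - S.inf' hSne c := by linarith
          linarith
        linarith
      · by_cases hj : ε < d j
        · have hjS : j ∈ S := Finset.mem_filter.2 ⟨Finset.mem_range.2 (hN' j hj), hj⟩
          have hδ : S.inf' hSne c ≤ c j := Finset.inf'_le c hjS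
          have h2 := hle i
          have : e i + e j < ε := by
            rw [show c j = d j / 2 - e j from rfl] at hδ
            have : e j ≤ d j / 2 - S.inf' hSne c := by linarith
            linarith
          linarith
        · push_neg at hi hj
          have h1 := hle i
          have h2 := hle j
          linarith
  · refine ⟨ε, hε, ?_⟩
    intro i j hij
    have htri : dist (T^[i + 1] x) (T^[j + 1] x) ≤ e i + e j :=
      dist_triangle_right _ _ _
    have hi : d i ≤ ε := by
      by_contra h
      push_neg at h
      exact hSne ⟨i, Finset.mem_filter.2 ⟨Finset.mem_range.2 (hN' i h), h⟩⟩
    have hj : d j ≤ ε := by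
      by_contra h
      push_neg at h
      exact hSne ⟨j, Finset.mem_filter.2 ⟨Finset.mem_range.2 (hN' j h), h⟩⟩
    have h1 := hle i
    have h2 := hle j
    linarith
end

section
/- Let (X,d) be a metric space, T: X → X satisfy (CM_K), and x ∈ X. If for every ε > 0 there exists δ > 0 such that for all i, (1/2)(d(T^i x, T^{i+1} x) + d(T^{i+1} x, T^{i+2} x)) < ε + δ implies d(T^{i+1} x, T^{i+2} x) ≤ ε, then lim_n d(T^n x, T^{n+1} x) = 0. -/
open Filter Topology

theorem stmt_11 {X : Type*} [MetricSpace X] (T : X → X)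
    (hK : ∀ x y : X, x ≠ y → dist (T x) (T y) < (dist x (T x) + dist y (T y)) / 2)
    (x : X)
    (h : ∀ ε > (0 : ℝ), ∃ δ > (0 : ℝ), ∀ i : ℕ,
      (dist (T^[i] x) (T^[i + 1] x) + dist (T^[i + 1] x) (T^[i + 2] x)) / 2 < ε + δ →
      dist (T^[i + 1] x) (T^[i + 2] x) ≤ ε) :
    Tendsto (fun n : ℕ => dist (T^[n] x) (T^[n + 1] x)) atTop (𝓝 0) := by
  set a : ℕ → ℝ := fun n => dist (T^[n] x) (T^[n + 1] x) with ha
  have hstep : ∀ n, a (n + 1) ≤ a n := by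
    intro n
    have h2 : a (n + 1) = dist (T (T^[n] x)) (T (T^[n + 1] x)) := by
      simp only [ha]
      rw [← Function.iterate_succ_apply' T n, ← Function.iterate_succ_apply' T (n+1)]
    by_cases he : T^[n] x = T^[n + 1] x
    · have : a (n + 1) = 0 := by rw [h2, he]; simp
      rw [this]; exact dist_nonneg
    · have hk := hK _ _ he
      have h3 : dist (T^[n] x) (T (T^[n] x)) = a n := by
        simp only [ha]; rw [← Function.iterate_succ_apply' T n]
      have h4 : dist (T^[n + 1] x) (T (T^[n + 1] x)) = a (n + 1) := by
        simp only [ha]; rw [← Function.iterate_succ_apply' T (n+1)]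
      rw [h3, h4, ← h2] at hk
      linarith
  have hanti : Antitone a := antitone_nat_of_succ_le hstep
  have hbdd : BddBelow (Set.range a) := ⟨0, by rintro _ ⟨n, rfl⟩; exact dist_nonneg⟩
  have htend : Tendsto a atTop (𝓝 (⨅ n, a n)) := tendsto_atTop_ciInf hanti hbdd
  set L := ⨅ n, a n with hL
  have hLle : ∀ n, L ≤ a n := fun n => ciInf_le hbdd n
  have hL0 : 0 ≤ L := le_ciInf fun n => dist_nonneg
  rcases eq_or_lt_of_le hL0 with hL0' | hLpos
  · rw [← hL0'] at htend; exact htend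
  · exfalso
    obtain ⟨δ, hδ, hδh⟩ := h L hLpos
    have : ∀ᶠ n in atTop, a n < L + δ :=
      htend.eventually (eventually_lt_nhds (by linarith))
    obtain ⟨i, hi⟩ := this.exists
    have h1 : (a i + a (i + 1)) / 2 < L + δ := by
      have := hstep i; linarith
    have h2 : a (i + 1) ≤ L := hδh i h1
    have h3 : a (i + 1) = L := le_antisymm h2 (hLle _)
    have hne : T^[i + 1] x ≠ T^[i + 2] x := by
      intro he
      have : a (i + 1) = 0 := by simp [ha, he]
      rw [h3] at this; linarith
    have hk := hK _ _ hne
    have h4 : a (i + 2) = dist (T (T^[i + 1] x)) (T (T^[i + 2] x)) := by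
      simp only [ha]
      rw [← Function.iterate_succ_apply' T (i+1), ← Function.iterate_succ_apply' T (i+2)]
    have h5 : dist (T^[i + 2] x) (T (T^[i + 2] x)) = a (i + 2) := by
      simp only [ha]
      rw [← Function.iterate_succ_apply' T (i+2)]
    have h6 : dist (T^[i + 1] x) (T (T^[i + 1] x)) = a (i + 1) := by
      simp only [ha]
      rw [← Function.iterate_succ_apply' T (i+1)]
    rw [h5, h6, ← h4] at hk
    have := hLle (i + 2)
    linarith
end

section
/- Let a_n = Σ_{j=1}^n 1/j, X = {a_n : n ≥ 0}, T: X → X with Ta_n = a_{n+1}. Then for every x ∈ X and every ε > 0 there exists δ > 0 such that for all i, d(T^i x, T^{i+1} x) < ε + δ implies d(T^{i+1} x, T^{i+2} x) ≤ ε (i.e., condition (B2) holds), while condition (B1) fails: there exist x ∈ X and ε > 0 such that for every δ > 0 there exist i, j with d(T^i x, T^j x) < ε + δ and d(T^{i+1} x, T^{j+1} x) > ε. -/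
noncomputable def harm (n : ℕ) : ℝ := ∑ j ∈ Finset.range n, 1 / ((j : ℝ) + 1)

/-!
The orbit of `a_n` is `i ↦ a_{n+i}`, and consecutive gaps are `1 / (m + 1)`.

(B2): the gap after `s = 1 / (m + 1)` is `s / (1 + s)`, so `δ = ε ^ 2` works uniformly.

(B1) fails for `x = a_0`, `ε = 1`: since `a_n → ∞` with gaps tending to `0`, for large `i` the
last `j` with `a_j ≤ a_{i+1} + 1` has `a_j - a_i` at most `1` plus a small gap, while by the
choice of `j` the shifted pair satisfies `a_{j+1} - a_{i+1} > 1`.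
-/

open Filter

lemma harm_zero : harm 0 = 0 :=
  Finset.sum_range_zero _

lemma harm_succ (m : ℕ) : harm (m + 1) = harm m + 1 / ((m : ℝ) + 1) :=
  Finset.sum_range_succ _ _

lemma harm_mono : Monotone harm := fun _ _ hab =>
  Finset.sum_le_sum_of_subset_of_nonneg (Finset.range_subset_range.2 hab) fun _ _ _ => by
    positivity

lemma tendsto_harm_atTop : Tendsto harm atTop atTop :=
  Real.tendsto_sum_range_one_div_nat_succ_atTop

lemma dist_harm_succ (m : ℕ) : dist (harm m) (harm (m + 1)) = 1 / ((m : ℝ) + 1) := by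
  rw [dist_comm, Real.dist_eq, harm_succ, add_sub_cancel_left, abs_of_pos (by positivity)]

lemma one_div_add_one_add_one_le {x ε : ℝ} (hx : 0 < x + 1) (hε : 0 < ε)
    (h : 1 / (x + 1) < ε + ε ^ 2) : 1 / (x + 1 + 1) ≤ ε := by
  rw [div_lt_iff₀ hx] at h
  rw [div_le_iff₀ (by linarith)]
  nlinarith

lemma exists_harm_le_lt_harm_succ (i : ℕ) :
    ∃ j, i ≤ j ∧ harm j ≤ harm i + 1 / ((i : ℝ) + 1) + 1 ∧ harm (i + 1) + 1 < harm (j + 1) := by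
  obtain ⟨j, hj, hj_succ⟩ := Nat.exists_not_and_succ_of_not_zero_of_exists
    (p := fun k => harm (i + 1) + 1 < harm k)
    (not_lt.2 <| by linarith [harm_zero, harm_mono (Nat.zero_le (i + 1))])
    (tendsto_harm_atTop.eventually_gt_atTop _).exists
  have hij : i ≤ j := by
    have := harm_mono.reflect_lt (by linarith : harm (i + 1) < harm (j + 1))
    omega
  exact ⟨j, hij, harm_succ i ▸ not_lt.1 hj, hj_succ⟩

/-- On X = {a_n}, with T a_n = a_{n+1}, the iterates from a_n are T^[i] a_n = a_{n+i}.
(B2) holds but (B1) fails. -/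
theorem stmt_14 :
    (∀ n : ℕ, ∀ ε > (0 : ℝ), ∃ δ > (0 : ℝ), ∀ i : ℕ,
      dist (harm (n + i)) (harm (n + i + 1)) < ε + δ →
      dist (harm (n + i + 1)) (harm (n + i + 2)) ≤ ε) ∧
    (∃ n : ℕ, ∃ ε > (0 : ℝ), ∀ δ > (0 : ℝ), ∃ i j : ℕ,
      dist (harm (n + i)) (harm (n + j)) < ε + δ ∧
      dist (harm (n + i + 1)) (harm (n + j + 1)) > ε) := by
  refine ⟨fun n ε hε => ⟨ε ^ 2, by positivity, fun i hi => ?_⟩, ⟨0, 1, one_pos, fun δ hδ => ?_⟩⟩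
  · rw [dist_harm_succ] at hi
    rw [dist_harm_succ, Nat.cast_succ]
    exact one_div_add_one_add_one_le (by positivity) hε hi
  · obtain ⟨i, hi⟩ := exists_nat_one_div_lt hδ
    obtain ⟨j, hij, hj, hj_succ⟩ := exists_harm_le_lt_harm_succ i
    simp only [zero_add]
    refine ⟨i, j, ?_, lt_of_lt_of_le (by linarith) ((Real.sub_le_dist _ _).trans_eq (dist_comm _ _))⟩
    rw [dist_comm, Real.dist_eq, abs_of_nonneg (sub_nonneg.2 (harm_mono hij))]
    linarith
end

section
/- Let (X,d) be a metric space and T: X → X satisfy (CM_B). Let x ∈ X with x_n = T^n x and x_n ≠ x_{n+1} for all n. If for every ε > 0 there exists δ > 0 such that d(T^i x, T^{i+1} x) < ε + δ implies d(T^{i+1} x, T^{i+2} x) ≤ ε for all i, then d(x_n, x_{n+1}) → 0 as n → ∞. -/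
open Filter Topology

theorem stmt_15 {X : Type*} [MetricSpace X] (T : X → X)
    (hB : ∀ x y : X, x ≠ y → dist (T x) (T y) < dist x y)
    (x : X) (hx : ∀ n : ℕ, T^[n] x ≠ T^[n + 1] x)
    (h : ∀ ε > (0 : ℝ), ∃ δ > (0 : ℝ), ∀ i : ℕ,
      dist (T^[i] x) (T^[i + 1] x) < ε + δ → dist (T^[i + 1] x) (T^[i + 2] x) ≤ ε) :
    Tendsto (fun n : ℕ => dist (T^[n] x) (T^[n + 1] x)) atTop (𝓝 0) := by
  set d : ℕ → ℝ := fun n => dist (T^[n] x) (T^[n + 1] x) with hd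
  have hdec : StrictAnti d := by
    apply strictAnti_nat_of_succ_lt
    intro n
    have := hB (T^[n] x) (T^[n + 1] x) (hx n)
    simpa [hd, Function.iterate_succ_apply'] using this
  have hbdd : BddBelow (Set.range d) := ⟨0, by rintro _ ⟨n, rfl⟩; exact dist_nonneg⟩
  have htend : Tendsto d atTop (𝓝 (⨅ n, d n)) :=
    tendsto_atTop_ciInf hdec.antitone hbdd
  have hc0 : (0 : ℝ) ≤ ⨅ n, d n := le_ciInf fun n => dist_nonneg
  rcases eq_or_lt_of_le hc0 with heq | hlt
  · rwa [← heq] at htend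
  · exfalso
    obtain ⟨δ, hδ, hδ'⟩ := h _ hlt
    have : ∀ᶠ i in atTop, d i < (⨅ n, d n) + δ :=
      htend.eventually (eventually_lt_nhds (by linarith))
    obtain ⟨i, hi⟩ := this.exists
    have h1 : d (i + 1) ≤ ⨅ n, d n := hδ' i hi
    have h2 : (⨅ n, d n) ≤ d (i + 2) := ciInf_le hbdd _
    have h3 : d (i + 2) < d (i + 1) := hdec (by omega)
    linarith
end

section
/- Let (X,d) be a metric space, T: X → X satisfy (CM_K), let x ∈ X with α = lim_n d(T^n x, T^{n+1} x) = 0, and let k ∈ ℕ ∪ {0} with ε = d(T^k x, T^{k+1} x) > 0. Then for all i, j ≥ k, d(T^{i+1} x, T^{j+1} x) ≤ ε. -/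
open Filter Topology

theorem stmt_19 {X : Type*} [MetricSpace X] (T : X → X)
    (hK : ∀ x y : X, x ≠ y → dist (T x) (T y) < (dist x (T x) + dist y (T y)) / 2)
    (x : X)
    (hx : Tendsto (fun n : ℕ => dist (T^[n] x) (T^[n + 1] x)) atTop (𝓝 0))
    (k : ℕ) (hk : 0 < dist (T^[k] x) (T^[k + 1] x)) :
    ∀ i j : ℕ, k ≤ i → k ≤ j →
      dist (T^[i + 1] x) (T^[j + 1] x) ≤ dist (T^[k] x) (T^[k + 1] x) := by
  have hweak : ∀ a b : X, dist (T a) (T b) ≤ (dist a (T a) + dist b (T b)) / 2 := by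
    intro a b
    rcases eq_or_ne a b with rfl | h
    · simp
    · exact (hK a b h).le
  have hdec : ∀ n : ℕ, dist (T^[n + 1] x) (T^[n + 2] x) ≤ dist (T^[n] x) (T^[n + 1] x) := by
    intro n
    have := hweak (T^[n] x) (T^[n + 1] x)
    rw [← Function.iterate_succ_apply' T n x, ← Function.iterate_succ_apply' T (n+1) x] at this
    linarith
  have hmono : ∀ m n : ℕ, m ≤ n → dist (T^[n] x) (T^[n + 1] x) ≤ dist (T^[m] x) (T^[m + 1] x) := by
    intro m n h
    induction n with
    | zero => simp_all
    | succ n ih =>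
      rcases Nat.lt_or_ge m (n + 1) with h' | h'
      · exact le_trans (hdec n) (ih (Nat.lt_succ_iff.mp h'))
      · have : m = n + 1 := le_antisymm h h'
        subst this; rfl
  intro i j hi hj
  have := hweak (T^[i] x) (T^[j] x)
  rw [← Function.iterate_succ_apply' T i x, ← Function.iterate_succ_apply' T j x] at this
  have h1 := hmono k i hi
  have h2 := hmono k j hj
  linarith
end
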